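/- Let f : ℝ → ℂ be a function in L²(ℝ) such that f(x) = ∫_ℝ k(x,y) f(y) dy for every x ∈ ℝ. Write f_− = f·𝟙_{(−∞,0]}, f_+ = f·𝟙_{(0,∞)}, and f̌_+(x) = f_+(−x). Then for every x > 0, f(x) = Π_{c_+}[ f_+ + (ρ_+−ρ_−)· f̌_+·𝟙_{(−∞,0]} + 2ρ_−·√(c_−/c_+)·(δ_{c_+/c_−} f_−)·𝟙_{(−∞,0]} ](x). -/

import Mathlib

/-- `sinc t = sin t / t` for `t ≠ 0`, `sinc 0 = 1`. -/
noncomputable def sinc (t : ℝ) : ℝ := if t = 0 then 1 else Real.sin t / t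

/-- The reproducing kernel of the variable-bandwidth Paley–Wiener space
`PW_{[0,Ω]}(A_p)` in the toy model, where `p = p₋` on `(-∞, 0]` and `p = p₊` on
`(0, ∞)`, with `c_± = √(Ω/p_±)` and `ρ_± = √(p_±)/(√(p₋) + √(p₊))`. -/
noncomputable def toyKernel (pm pp Ω : ℝ) (x y : ℝ) : ℝ :=
  let cm := Real.sqrt (Ω / pm)
  let cp := Real.sqrt (Ω / pp)
  let rm := Real.sqrt pm / (Real.sqrt pm + Real.sqrt pp)
  let rp := Real.sqrt pp / (Real.sqrt pm + Real.sqrt pp)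
  if x ≤ 0 then
    if y ≤ 0 then (cm / Real.pi) * (sinc (cm * (x - y)) - (rp - rm) * sinc (cm * (x + y)))
    else (2 * cp * rp / Real.pi) * sinc (cm * x - cp * y)
  else
    if y ≤ 0 then (2 * cm * rm / Real.pi) * sinc (cp * x - cm * y)
    else (cp / Real.pi) * (sinc (cp * (x - y)) + (rp - rm) * sinc (cp * (x + y)))

/-- The orthogonal projection of `L²(ℝ)` onto the Paley–Wiener space `PW_c(ℝ)`,
evaluated pointwise: `Π_c φ(x) = (c/π) ∫ sinc(c(x - y)) φ(y) dy`. -/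
noncomputable def PiProj (c : ℝ) (φ : ℝ → ℂ) (x : ℝ) : ℂ :=
  ((c / Real.pi : ℝ) : ℂ) * ∫ y : ℝ, ((sinc (c * (x - y)) : ℝ) : ℂ) * φ y

/-- The `L²`-normalized dilation `δ_a φ(x) = √a · φ(a x)`. -/
noncomputable def dil (a : ℝ) (φ : ℝ → ℂ) (x : ℝ) : ℂ :=
  ((Real.sqrt a : ℝ) : ℂ) * φ (a * x)

/-!
For `x > 0` the kernel row `k(x, ·)` consists of
`(c₊/π)(sinc(c₊(x - ·)) + (ρ₊ - ρ₋) sinc(c₊(x + ·)))` on `(0, ∞)` and `(2c₋ρ₋/π) sinc(c₊x - c₋ ·)` on `(-∞, 0]`. The substitution `y ↦ -y` turns the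
second piece, and `y ↦ (c₊/c₋) y` the third, into integrals against `sinc(c₊(x - ·))`, i.e. into
`Π_{c₊}` of the reflected and of the dilated function; the `L²` normalisation of `δ_{c₊/c₋}` is
compensated by the factor `√(c₋/c₊)`. Every integral converges because `sinc ∈ L²(ℝ)`.
-/

open MeasureTheory Set
open scoped Real ENNReal

theorem sinc_eq_real_sinc : sinc = Real.sinc := rfl

theorem sinc_sq_mul_one_add_sq_le_two (t : ℝ) : sinc t ^ 2 * (1 + t ^ 2) ≤ 2 := by
  have hsinc : sinc t ^ 2 ≤ 1 := by
    rw [sq_le_one_iff_abs_le_one, sinc_eq_real_sinc]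
    exact Real.abs_sinc_le_one t
  have hsin : sinc t ^ 2 * t ^ 2 ≤ 1 := by
    rcases eq_or_ne t 0 with rfl | ht
    · simp
    · rw [sinc_eq_real_sinc, Real.sinc_of_ne_zero ht, div_pow,
        div_mul_cancel₀ _ (pow_ne_zero 2 ht)]
      exact Real.sin_sq_le_one t
  linarith

theorem integrable_sinc_sq : Integrable fun t : ℝ => sinc t ^ 2 := by
  refine (integrable_inv_one_add_sq.const_mul 2).mono'
    (Real.continuous_sinc.pow 2).aestronglyMeasurable (Filter.Eventually.of_forall fun t => ?_)
  rw [Real.norm_of_nonneg (sq_nonneg _), ← div_eq_mul_inv, le_div_iff₀ (by positivity)]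
  exact sinc_sq_mul_one_add_sq_le_two t

theorem memLp_two_sinc : MemLp (fun t : ℝ => (sinc t : ℂ)) 2 := by
  refine (memLp_two_iff_integrable_sq_norm ?_).2 ?_
  · exact (Complex.continuous_ofReal.comp Real.continuous_sinc).aestronglyMeasurable
  · simpa only [Complex.norm_real, Real.norm_eq_abs, sq_abs] using integrable_sinc_sq

theorem MeasureTheory.MemLp.comp_mul_left {E : Type*} [NormedAddCommGroup E] {p : ℝ≥0∞}
    {φ : ℝ → E} (hφ : MemLp φ p) {a : ℝ} (ha : a ≠ 0) : MemLp (fun x => φ (a * x)) p := by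
  have hmap : MemLp φ p (Measure.map (a * ·) volume) := by
    rw [Real.map_volume_mul_left ha]
    exact hφ.smul_measure ENNReal.ofReal_ne_top
  exact (memLp_map_measure_iff hmap.1 (measurable_const_mul a).aemeasurable).1 hmap

theorem MeasureTheory.MemLp.dil {p : ℝ≥0∞} {φ : ℝ → ℂ} (hφ : MemLp φ p) {a : ℝ} (ha : a ≠ 0) :
    MemLp (dil a φ) p :=
  (hφ.comp_mul_left ha).const_mul _

theorem integrable_sinc_affine_mul {c : ℝ} (hc : c ≠ 0) (d : ℝ) {g : ℝ → ℂ} (hg : MemLp g 2) :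
    Integrable fun y => (sinc (c * y + d) : ℂ) * g y :=
  ((memLp_two_sinc.comp_measurePreserving (measurePreserving_add_right volume d)).comp_mul_left
    hc).integrable_mul hg

theorem indicator_Iic_comp_neg_indicator_Ioi {M : Type*} [Zero M] (g : ℝ → M) :
    (Iic 0).indicator (fun t => (Ioi 0).indicator g (-t)) = fun t => (Ioi 0).indicator g (-t) := by
  refine indicator_eq_self.2 fun t ht => ?_
  by_contra h
  exact ht (indicator_of_notMem (by simpa using (not_le.1 h).le) g)

theorem indicator_Iic_dil_indicator_Iic {a : ℝ} (ha : 0 < a) (g : ℝ → ℂ) :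
    (Iic 0).indicator (dil a ((Iic 0).indicator g)) = dil a ((Iic 0).indicator g) := by
  refine indicator_eq_self.2 fun t ht => ?_
  by_contra h
  refine ht ?_
  rw [dil, indicator_of_notMem (by simpa using mul_pos ha (not_le.1 h)) g, mul_zero]

section PiProj

variable {c x : ℝ} {φ ψ : ℝ → ℂ}

theorem integrable_sinc_mul_sub_mul (hc : c ≠ 0) (hφ : MemLp φ 2) :
    Integrable fun y => (sinc (c * (x - y)) : ℂ) * φ y := by
  convert integrable_sinc_affine_mul (neg_ne_zero.2 hc) (c * x) hφ using 5
  ring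

theorem piProj_add (hc : c ≠ 0) (hφ : MemLp φ 2) (hψ : MemLp ψ 2) :
    PiProj c (fun y => φ y + ψ y) x = PiProj c φ x + PiProj c ψ x := by
  simp only [PiProj, mul_add]
  rw [integral_add (integrable_sinc_mul_sub_mul hc hφ) (integrable_sinc_mul_sub_mul hc hψ), mul_add]

theorem piProj_const_mul (a : ℂ) : PiProj c (fun y => a * φ y) x = a * PiProj c φ x := by
  simp only [PiProj, mul_left_comm _ a, integral_const_mul]

theorem piProj_comp_neg :
    PiProj c (fun y => φ (-y)) x = ((c / π : ℝ) : ℂ) * ∫ y, (sinc (c * (x + y)) : ℂ) * φ y := by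
  rw [PiProj, ← integral_neg_eq_self]
  simp only [neg_neg, sub_neg_eq_add]

theorem piProj_dil {a : ℝ} (ha : 0 < a) :
    PiProj c (dil a φ) x
      = ((c / π / √a : ℝ) : ℂ) * ∫ y, (sinc (c * x - c / a * y) : ℂ) * φ y := by
  have hsub : ∀ y, c * (x - y) = c * x - c / a * (a * y) := fun y => by field_simp
  have hsqrt : (√a : ℂ) * √a = a := by exact_mod_cast Real.mul_self_sqrt ha.le
  have hsqrt0 : (√a : ℂ) ≠ 0 := by exact_mod_cast (Real.sqrt_pos.2 ha).ne'
  simp only [PiProj, dil, hsub, mul_left_comm _ ((√a : ℝ) : ℂ), integral_const_mul]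
  rw [Measure.integral_comp_mul_left (fun y => (sinc (c * x - c / a * y) : ℂ) * φ y) a,
    Complex.real_smul, abs_inv, abs_of_pos ha]
  push_cast
  rw [← hsqrt]
  field_simp

end PiProj

section ToyModel

variable {pm pp Ω : ℝ}

local notation "c₋" => √(Ω / pm)
local notation "c₊" => √(Ω / pp)
local notation "ρ₋" => √pm / (√pm + √pp)
local notation "ρ₊" => √pp / (√pm + √pp)

theorem toyKernel_mul_of_pos {x : ℝ} (hx : 0 < x) (f : ℝ → ℂ) (y : ℝ) :
    (toyKernel pm pp Ω x y : ℂ) * f y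
      = ((c₊ / π : ℝ) : ℂ) * ((sinc (c₊ * (x - y)) : ℂ) * (Ioi 0).indicator f y)
        + ((c₊ / π * (ρ₊ - ρ₋) : ℝ) : ℂ) * ((sinc (c₊ * (x + y)) : ℂ) * (Ioi 0).indicator f y)
        + ((2 * c₋ * ρ₋ / π : ℝ) : ℂ) * ((sinc (c₊ * x - c₋ * y) : ℂ) * (Iic 0).indicator f y) := by
  rcases le_or_gt y 0 with hy | hy
  · simp only [toyKernel, if_neg hx.not_ge, if_pos hy, indicator_of_mem (mem_Iic.2 hy),
      indicator_of_notMem (notMem_Ioi.2 hy)]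
    push_cast
    ring
  · simp only [toyKernel, if_neg hx.not_ge, if_neg hy.not_ge, indicator_of_mem (mem_Ioi.2 hy),
      indicator_of_notMem (notMem_Iic.2 hy)]
    push_cast
    ring

theorem integral_toyKernel_mul_of_pos (hpm : 0 < pm) (hpp : 0 < pp) (hΩ : 0 < Ω) {f : ℝ → ℂ}
    (hf : MemLp f 2) {x : ℝ} (hx : 0 < x) :
    ∫ y, (toyKernel pm pp Ω x y : ℂ) * f y
      = PiProj c₊ ((Ioi 0).indicator f) x
        + ((c₊ / π * (ρ₊ - ρ₋) : ℝ) : ℂ) * (∫ y, (sinc (c₊ * (x + y)) : ℂ) * (Ioi 0).indicator f y)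
        + ((2 * c₋ * ρ₋ / π : ℝ) : ℂ)
          * ∫ y, (sinc (c₊ * x - c₋ * y) : ℂ) * (Iic 0).indicator f y := by
  have hcm : c₋ ≠ 0 := (Real.sqrt_pos.2 (div_pos hΩ hpm)).ne'
  have hcp : c₊ ≠ 0 := (Real.sqrt_pos.2 (div_pos hΩ hpp)).ne'
  have hfp : MemLp ((Ioi 0).indicator f) 2 := hf.indicator measurableSet_Ioi
  have hfm : MemLp ((Iic 0).indicator f) 2 := hf.indicator measurableSet_Iic
  have h₁ := integrable_sinc_mul_sub_mul (x := x) hcp hfp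
  have h₂ : Integrable fun y => (sinc (c₊ * (x + y)) : ℂ) * (Ioi 0).indicator f y := by
    convert integrable_sinc_affine_mul hcp (c₊ * x) hfp using 5
    ring
  have h₃ : Integrable fun y => (sinc (c₊ * x - c₋ * y) : ℂ) * (Iic 0).indicator f y := by
    convert integrable_sinc_affine_mul (neg_ne_zero.2 hcm) (c₊ * x) hfm using 5
    ring
  simp only [toyKernel_mul_of_pos hx f]
  rw [integral_add ?_ (h₃.const_mul _), integral_add (h₁.const_mul _) (h₂.const_mul _),
    integral_const_mul, integral_const_mul, integral_const_mul, PiProj]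
  exact (h₁.const_mul _).add (h₂.const_mul _)

end ToyModel

/-- If `f ∈ L²(ℝ)` satisfies the reproducing identity of the toy model, then for `x > 0`,
`f(x) = Π_{c₊}[f₊ + (ρ₊ - ρ₋)·f̌₊·𝟙_{(-∞,0]} + 2ρ₋·√(c₋/c₊)·(δ_{c₊/c₋} f₋)·𝟙_{(-∞,0]}](x)`,
where `f₋ = f·𝟙_{(-∞,0]}`, `f₊ = f·𝟙_{(0,∞)}` and `f̌₊(x) = f₊(-x)`. -/
theorem toy_positive_part_formula (pm pp Ω : ℝ) (hpm : 0 < pm) (hpp : 0 < pp)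
    (hΩ : 0 < Ω) (f : ℝ → ℂ)
    (hf2 : MeasureTheory.MemLp f 2 MeasureTheory.volume)
    (hf : ∀ x : ℝ, f x = ∫ y : ℝ, ((toyKernel pm pp Ω x y : ℝ) : ℂ) * f y) :
    ∀ x : ℝ, 0 < x →
      f x = PiProj (Real.sqrt (Ω / pp))
        (fun y => (Set.Ioi (0 : ℝ)).indicator f y
          + (((Real.sqrt pp - Real.sqrt pm) / (Real.sqrt pm + Real.sqrt pp) : ℝ) : ℂ) *
              (Set.Iic (0 : ℝ)).indicator (fun t => (Set.Ioi (0 : ℝ)).indicator f (-t)) y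
          + ((2 * (Real.sqrt pm / (Real.sqrt pm + Real.sqrt pp)) *
              Real.sqrt (Real.sqrt (Ω / pm) / Real.sqrt (Ω / pp)) : ℝ) : ℂ) *
              (Set.Iic (0 : ℝ)).indicator
                (dil (Real.sqrt (Ω / pp) / Real.sqrt (Ω / pm))
                  ((Set.Iic (0 : ℝ)).indicator f)) y) x := by
  intro x hx
  have hcm : 0 < √(Ω / pm) := Real.sqrt_pos.2 (div_pos hΩ hpm)
  have hcp : 0 < √(Ω / pp) := Real.sqrt_pos.2 (div_pos hΩ hpp)
  have ha : 0 < √(Ω / pp) / √(Ω / pm) := div_pos hcp hcm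
  have hfp : MemLp ((Ioi 0).indicator f) 2 := hf2.indicator measurableSet_Ioi
  have hfm : MemLp ((Iic 0).indicator f) 2 := hf2.indicator measurableSet_Iic
  have hrefl : MemLp (fun t => (Ioi 0).indicator f (-t)) 2 :=
    hfp.comp_measurePreserving (Measure.measurePreserving_neg volume)
  have hdil_coeff : 2 * (√pm / (√pm + √pp)) * √(√(Ω / pm) / √(Ω / pp))
      * (√(Ω / pp) / π / √(√(Ω / pp) / √(Ω / pm)))
      = 2 * √(Ω / pm) * (√pm / (√pm + √pp)) / π := by
    rw [← inv_div (√(Ω / pm)), Real.sqrt_inv, div_inv_eq_mul]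
    field_simp
    rw [Real.sq_sqrt (div_pos hcm hcp).le]
    field_simp
  rw [indicator_Iic_comp_neg_indicator_Ioi, indicator_Iic_dil_indicator_Iic ha]
  beta_reduce
  rw [piProj_add hcp.ne' ?_ ((hfm.dil ha.ne').const_mul _),
    piProj_add hcp.ne' hfp (hrefl.const_mul _), piProj_const_mul, piProj_const_mul,
    piProj_comp_neg, piProj_dil ha, div_div_cancel₀ hcp.ne', hf x,
    integral_toyKernel_mul_of_pos hpm hpp hΩ hf2 hx, sub_div]
  · have := congrArg (fun r : ℝ => (r : ℂ)) hdil_coeff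
    push_cast at this ⊢
    linear_combination
      (-∫ y, (sinc (√(Ω / pp) * x - √(Ω / pm) * y) : ℂ) * (Iic 0).indicator f y) * this
  · exact hfp.add (hrefl.const_mul _)
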